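/- For all integers x, t with |x| < t and x + t even: a1(x,t) = 2^{(1−t)/2} · Σ_{r=0}^{(t−|x|)/2} (−2)^r · C((x+t−2)/2, r) · C(t−r−2, (x+t−2)/2) and a2(x,t) = 2^{(1−t)/2} · Σ_{r=0}^{(t−|x|)/2} (−2)^r · C((x+t−2)/2, r) · C(t−r−2, (x+t−4)/2), where C(n,k) is the binomial coefficient, set to 0 when k < 0 or k > n. -/
import Mathlib


open scoped BigOperators

noncomputable section

/-- Endpoint `x`-coordinate of a checker path of `n` steps encoded by step directions:
`true` = step `(1,1)`, `false` = step `(-1,1)`. -/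
def endpt {n : ℕ} (d : Fin n → Bool) : ℤ :=
  ∑ i, (if d i then (1 : ℤ) else -1)

/-- The number of turns of a checker path encoded by step directions. -/
def turns {n : ℕ} (d : Fin n → Bool) : ℕ :=
  ((Finset.range n).filter fun i =>
    ∃ h : i + 1 < n, d ⟨i, Nat.lt_of_succ_lt h⟩ ≠ d ⟨i + 1, h⟩).card

/-- Checker paths from `(0,0)` to `(x,n)` with the first step to `(1,1)`,
encoded by their step directions. -/
def pathsTo (x : ℤ) (n : ℕ) : Finset (Fin n → Bool) :=
  Finset.univ.filter fun d => (∃ h : 0 < n, d ⟨0, h⟩ = true) ∧ endpt d = x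

/-- Feynman checkers with mass `m` and lattice step `ε`: the value `a(εx, εt, m, ε)`,
where `x t : ℤ` are the coordinates in units of `ε`. -/
def am (x t : ℤ) (m ε : ℝ) : ℂ :=
  (1 + m ^ 2 * ε ^ 2 : ℂ) ^ ((1 - (t : ℂ)) / 2) * Complex.I *
    ∑ d ∈ pathsTo x t.toNat, (-Complex.I * (m * ε)) ^ turns d

/-- The basic model: `a(x,t)`. -/
def a (x t : ℤ) : ℂ :=
  (2 : ℂ) ^ ((1 - (t : ℂ)) / 2) * Complex.I *
    ∑ d ∈ pathsTo x t.toNat, (-Complex.I) ^ turns d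

/-- Binomial coefficient with integer arguments, set to 0 if k < 0 or k > n. -/
def intChoose (n k : ℤ) : ℝ :=
  if 0 ≤ k ∧ k ≤ n then (n.toNat.choose k.toNat : ℝ) else 0

def eb (b : Bool) : ℤ := if b then 1 else -1

lemma endpt_snoc {m : ℕ} (d : Fin m → Bool) (b : Bool) :
    endpt (Fin.snoc d b : Fin (m+1) → Bool) = endpt d + eb b := by
  unfold endpt eb
  rw [Fin.sum_univ_castSucc]
  simp


lemma snoc_eval {m : ℕ} (d : Fin (m+1) → Bool) (b : Bool) (i : ℕ) (h : i < m+1) :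
    (Fin.snoc d b : Fin (m+2) → Bool) ⟨i, by omega⟩ = d ⟨i, h⟩ := by
  have e : (⟨i, by omega⟩ : Fin (m+2)) = Fin.castSucc ⟨i, h⟩ := rfl
  rw [e, Fin.snoc_castSucc]


lemma turns_snoc {m : ℕ} (d : Fin (m+1) → Bool) (b : Bool) :
    turns (Fin.snoc d b : Fin (m+2) → Bool) =
      turns d + (if d (Fin.last m) = b then 0 else 1) := by
  unfold turns
  set P' : ℕ → Prop := fun i => ∃ h : i + 1 < m+2,
    (Fin.snoc d b : Fin (m+2) → Bool) ⟨i, Nat.lt_of_succ_lt h⟩ ≠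
    (Fin.snoc d b : Fin (m+2) → Bool) ⟨i + 1, h⟩ with hP'
  set P : ℕ → Prop := fun i => ∃ h : i + 1 < m+1,
    d ⟨i, Nat.lt_of_succ_lt h⟩ ≠ d ⟨i + 1, h⟩ with hP
  have hP'top : ¬ P' (m+1) := by rintro ⟨h, -⟩; omega
  have hPtop : ¬ P m := by rintro ⟨h, -⟩; omega
  have hsame : ∀ i ∈ Finset.range m, P' i ↔ P i := by
    intro i hi
    rw [Finset.mem_range] at hi
    have h1 : i + 1 < m + 1 := by omega
    constructor
    · rintro ⟨h, hne⟩
      refine ⟨h1, ?_⟩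
      rwa [snoc_eval d b i (by omega), snoc_eval d b (i+1) (by omega)] at hne
    · rintro ⟨h, hne⟩
      refine ⟨by omega, ?_⟩
      rwa [snoc_eval d b i (by omega), snoc_eval d b (i+1) (by omega)]
  have hP'm : P' m ↔ ¬ (d (Fin.last m) = b) := by
    have e1 : (Fin.snoc d b : Fin (m+2) → Bool) ⟨m, by omega⟩ = d (Fin.last m) :=
      snoc_eval d b m (by omega)
    have e2 : (Fin.snoc d b : Fin (m+2) → Bool) ⟨m+1, by omega⟩ = b := by
      have e : (⟨m+1, by omega⟩ : Fin (m+2)) = Fin.last (m+1) := rfl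
      rw [e, Fin.snoc_last]
    constructor
    · rintro ⟨h, hne⟩
      rw [e1, e2] at hne; exact hne
    · intro hne
      exact ⟨by omega, by rw [e1, e2]; exact hne⟩
  have step1 : (Finset.range (m+2)).filter P' = (Finset.range (m+1)).filter P' := by
    rw [Finset.range_add_one, Finset.filter_insert, if_neg hP'top]
  have step2 : (Finset.range (m+1)).filter P = (Finset.range m).filter P := by
    rw [Finset.range_add_one, Finset.filter_insert, if_neg hPtop]
  have step3 : (Finset.range m).filter P' = (Finset.range m).filter P :=
    Finset.filter_congr hsame
  rw [step1, step2, Finset.range_add_one, Finset.filter_insert]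
  by_cases hb : d (Fin.last m) = b
  · rw [if_neg (by rw [hP'm]; exact fun h => h hb), step3, if_pos hb]
    omega
  · rw [if_pos (hP'm.mpr hb), step3, if_neg hb,
      Finset.card_insert_of_notMem (fun h => by
        have := Finset.mem_of_mem_filter _ h
        simp at this)]


lemma mem_pathsTo_snoc {m : ℕ} (d : Fin (m+1) → Bool) (b : Bool) (x : ℤ) :
    (Fin.snoc d b : Fin (m+2) → Bool) ∈ pathsTo x (m+2) ↔ d ∈ pathsTo (x - eb b) (m+1) := by
  simp only [pathsTo, Finset.mem_filter, Finset.mem_univ, true_and]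
  constructor
  · rintro ⟨⟨_h, h0⟩, he⟩
    refine ⟨⟨Nat.succ_pos m, ?_⟩, ?_⟩
    · have : (⟨0, by omega⟩ : Fin (m+2)) = Fin.castSucc ⟨0, Nat.succ_pos m⟩ := rfl
      rw [this, Fin.snoc_castSucc] at h0
      exact h0
    · rw [endpt_snoc] at he; omega
  · rintro ⟨⟨_h, h0⟩, he⟩
    refine ⟨⟨Nat.succ_pos (m+1), ?_⟩, ?_⟩
    · have : (⟨0, Nat.succ_pos (m+1)⟩ : Fin (m+2)) = Fin.castSucc ⟨0, Nat.succ_pos m⟩ := rfl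
      rw [this, Fin.snoc_castSucc]
      exact h0
    · rw [endpt_snoc]; omega


def SB (b : Bool) (x : ℤ) (m : ℕ) : ℂ :=
  ∑ d ∈ (pathsTo x (m+1)).filter (fun d => d (Fin.last m) = b),
    (-Complex.I) ^ turns d

lemma SB_rec (b : Bool) (x : ℤ) (m : ℕ) :
    SB b x (m+1) = SB b (x - eb b) m + (-Complex.I) * SB (!b) (x - eb b) m := by
  have key : ∑ d ∈ (pathsTo (x - eb b) (m+1)),
      (-Complex.I) ^ (turns d + if d (Fin.last m) = b then 0 else 1) = SB b x (m+1) := by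
    refine Finset.sum_bij' (fun d _ => (Fin.snoc d b : Fin (m+2) → Bool))
      (fun g _ => Fin.init g) ?_ ?_ ?_ ?_ ?_
    · intro d hd
      rw [Finset.mem_filter]
      exact ⟨(mem_pathsTo_snoc d b x).mpr hd, by simp⟩
    · intro g hg
      rw [Finset.mem_filter] at hg
      obtain ⟨hg1, hg2⟩ := hg
      rw [← mem_pathsTo_snoc (Fin.init g) b x]
      rwa [← hg2, Fin.snoc_init_self]
    · intro d _; simp
    · intro g hg
      have h2 := (Finset.mem_filter.mp hg).2
      show Fin.snoc (Fin.init g) b = g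
      rw [← h2]
      exact Fin.snoc_init_self g
    · intro d _
      rw [turns_snoc d b]
  rw [← key]
  rw [← Finset.sum_filter_add_sum_filter_not (pathsTo (x - eb b) (m+1))
    (fun d => d (Fin.last m) = b)]
  congr 1
  · unfold SB
    apply Finset.sum_congr rfl
    intro d hd
    rw [Finset.mem_filter] at hd
    rw [if_pos hd.2, add_zero]
  · unfold SB
    rw [Finset.mul_sum]
    rw [show (Finset.filter (fun d => ¬ d (Fin.last m) = b) (pathsTo (x - eb b) (m+1)))
      = (Finset.filter (fun d => d (Fin.last m) = !b) (pathsTo (x - eb b) (m+1))) from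
      Finset.filter_congr (fun d _ => by cases hdb : d (Fin.last m) <;> cases b <;> simp)]
    apply Finset.sum_congr rfl
    intro d hd
    rw [Finset.mem_filter] at hd
    rw [if_neg (by rw [hd.2]; cases b <;> simp), pow_add, pow_one]
    ring

lemma turns_one (d : Fin 1 → Bool) : turns d = 0 := by
  unfold turns
  rw [Finset.card_eq_zero, Finset.filter_eq_empty_iff]
  intro i hi
  rintro ⟨h, -⟩
  rw [Finset.mem_range] at hi
  omega


lemma fin1_eq (d : Fin 1 → Bool) (i j : Fin 1) : d i = d j := by
  congr 1
  exact Subsingleton.elim i j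

lemma endpt_one (d : Fin 1 → Bool) : endpt d = if d 0 then 1 else -1 := by
  unfold endpt
  exact Fin.sum_univ_one _

lemma SB_base (c : Bool) (x : ℤ) :
    SB c x 0 = if c = true ∧ x = 1 then 1 else 0 := by
  unfold SB
  by_cases h : c = true ∧ x = 1
  · obtain ⟨hc, hx⟩ := h
    subst hc; subst hx
    rw [if_pos ⟨rfl, rfl⟩]
    have hset : (pathsTo 1 (0+1)).filter (fun d => d (Fin.last 0) = true)
        = {(fun _ => true : Fin 1 → Bool)} := by
      ext d
      simp only [Finset.mem_filter, Finset.mem_singleton, pathsTo, Finset.mem_univ, true_and]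
      constructor
      · rintro ⟨⟨⟨_h, h0⟩, -⟩, -⟩
        funext i
        rw [fin1_eq d i ⟨0, by omega⟩]
        exact h0
      · rintro rfl
        refine ⟨⟨⟨by omega, rfl⟩, ?_⟩, rfl⟩
        rw [endpt_one]
        rfl
    rw [hset, Finset.sum_singleton, turns_one, pow_zero]
  · rw [if_neg h]
    have hset : (pathsTo x (0+1)).filter (fun d => d (Fin.last 0) = c) = ∅ := by
      rw [Finset.filter_eq_empty_iff]
      intro d hd
      simp only [pathsTo, Finset.mem_filter, Finset.mem_univ, true_and] at hd
      obtain ⟨⟨_h, h0⟩, he⟩ := hd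
      intro hlast
      apply h
      constructor
      · rw [← hlast, fin1_eq d (Fin.last 0) ⟨0, by omega⟩]
        exact h0
      · rw [← he, endpt_one, show d 0 = true from by rw [fin1_eq d 0 ⟨0, by omega⟩]; exact h0]
        rfl
    rw [hset, Finset.sum_empty]


lemma intChoose_of_neg {n k : ℤ} (h : k < 0) : intChoose n k = 0 :=
  if_neg (by omega)

lemma intChoose_of_lt {n k : ℤ} (h : n < k) : intChoose n k = 0 :=
  if_neg (by omega)

lemma intChoose_zero_right {n : ℤ} (h : 0 ≤ n) : intChoose n 0 = 1 := by
  rw [intChoose, if_pos ⟨le_refl 0, h⟩]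
  simp

lemma intChoose_pascal {n k : ℤ} (h : ¬(n = 0 ∧ k = 0)) :
    intChoose n k = intChoose (n-1) k + intChoose (n-1) (k-1) := by
  rcases lt_trichotomy k 0 with hk | hk | hk
  · rw [intChoose_of_neg hk, intChoose_of_neg hk, intChoose_of_neg (by omega)]
    ring
  · subst hk
    have hn : n ≠ 0 := fun hn => h ⟨hn, rfl⟩
    rcases lt_or_gt_of_ne hn with hn' | hn'
    · rw [intChoose_of_lt (by omega), intChoose_of_lt (by omega),
        intChoose_of_neg (by omega)]
      ring
    · rw [intChoose_zero_right (by omega), intChoose_zero_right (by omega),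
        intChoose_of_neg (by omega)]
      ring
  · rcases lt_or_ge n k with hnk | hnk
    · rw [intChoose_of_lt hnk, intChoose_of_lt (by omega), intChoose_of_lt (by omega)]
      ring
    · -- 0 < k ≤ n
      obtain ⟨a, ha⟩ : ∃ a : ℕ, n = (a : ℤ) + 1 := ⟨(n-1).toNat, by omega⟩
      obtain ⟨j, hj⟩ : ∃ j : ℕ, k = (j : ℤ) + 1 := ⟨(k-1).toNat, by omega⟩
      subst ha; subst hj
      have h1 : intChoose ((a:ℤ)+1) ((j:ℤ)+1) = ((a+1).choose (j+1) : ℝ) := by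
        rw [intChoose, if_pos ⟨by omega, hnk⟩]
        norm_num
      have h2 : intChoose ((a:ℤ)+1-1) ((j:ℤ)+1) = (a.choose (j+1) : ℝ) := by
        rcases le_or_gt ((j:ℤ)+1) ((a:ℤ)) with hc | hc
        · rw [intChoose, if_pos ⟨by omega, by omega⟩]
          norm_num
        · rw [intChoose_of_lt (by omega), Nat.choose_eq_zero_of_lt (by omega)]
          norm_num
      have h3 : intChoose ((a:ℤ)+1-1) ((j:ℤ)+1-1) = (a.choose j : ℝ) := by
        rw [intChoose, if_pos ⟨by omega, by omega⟩]
        norm_num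
      rw [h1, h2, h3, Nat.choose_succ_succ]
      push_cast
      ring


lemma intChoose_neg_left {n k : ℤ} (h : n < 0) : intChoose n k = 0 := by
  rcases lt_or_ge k 0 with hk | hk
  · exact intChoose_of_neg hk
  · exact intChoose_of_lt (by omega)


def F1 (x t : ℤ) : ℝ :=
  ∑ r ∈ Finset.range (t.toNat + 1),
    (-2:ℝ)^r * intChoose ((x+t-2)/2) r * intChoose (t - r - 2) ((x+t-2)/2)

def F2 (x t : ℤ) : ℝ :=
  ∑ r ∈ Finset.range (t.toNat + 1),
    (-2:ℝ)^r * intChoose ((x+t-2)/2) r * intChoose (t - r - 2) ((x+t-4)/2)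

lemma F1_rec (x t : ℤ) (ht : 3 ≤ t) : F1 x t = F1 (x+1) (t-1) + F2 (x+1) (t-1) := by
  have hT : t.toNat = (t-1).toNat + 1 := by omega
  set p : ℤ := (x+t-2)/2 with hp
  have hp1 : ((x+1)+(t-1)-2)/2 = p := by rw [hp]; congr 1; ring
  have hq1 : ((x+1)+(t-1)-4)/2 = p - 1 := by rw [hp]; omega
  have term : ∀ r : ℕ,
      (-2:ℝ)^r * intChoose p r * intChoose (t - r - 2) p
      = (-2:ℝ)^r * intChoose p r * intChoose (t - r - 3) p
        + (-2:ℝ)^r * intChoose p r * intChoose (t - r - 3) (p-1) := by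
    intro r
    by_cases hbad : t - r - 2 = 0 ∧ p = 0
    · have hr : (1:ℤ) ≤ r := by omega
      rw [intChoose_of_lt (show p < (r:ℤ) by omega)]
      ring
    · rw [intChoose_pascal hbad]
      have e : t - r - 2 - 1 = t - r - 3 := by ring
      rw [e]
      ring
  unfold F1 F2
  rw [Finset.sum_congr rfl (fun r _ => term r), Finset.sum_add_distrib, hT]
  rw [Finset.sum_range_succ ((fun r : ℕ => (-2:ℝ)^r * intChoose p r * intChoose (t - r - 3) p)) ((t-1).toNat + 1)]
  rw [Finset.sum_range_succ ((fun r : ℕ => (-2:ℝ)^r * intChoose p r * intChoose (t - r - 3) (p-1))) ((t-1).toNat + 1)]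
  have htop1 : t - ((t-1).toNat + 1 : ℕ) - 3 = -3 := by push_cast; omega
  rw [htop1, intChoose_neg_left (show (-3:ℤ) < 0 by omega),
    intChoose_neg_left (show (-3:ℤ) < 0 by omega)]
  have e1 : ∀ r : ℕ, t - 1 - r - 2 = t - r - 3 := fun r => by ring
  have esum1 : (∑ r ∈ Finset.range ((t-1).toNat + 1),
      (-2:ℝ)^r * intChoose ((x + 1 + (t - 1) - 2) / 2) r
        * intChoose (t - 1 - r - 2) ((x + 1 + (t - 1) - 2) / 2))
      = ∑ r ∈ Finset.range ((t-1).toNat + 1),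
      (-2:ℝ)^r * intChoose p r * intChoose (t - r - 3) p := by
    apply Finset.sum_congr rfl
    intro r _
    rw [hp1, e1 r]
  have esum2 : (∑ r ∈ Finset.range ((t-1).toNat + 1),
      (-2:ℝ)^r * intChoose ((x + 1 + (t - 1) - 2) / 2) r
        * intChoose (t - 1 - r - 2) ((x + 1 + (t - 1) - 4) / 2))
      = ∑ r ∈ Finset.range ((t-1).toNat + 1),
      (-2:ℝ)^r * intChoose p r * intChoose (t - r - 3) (p-1) := by
    apply Finset.sum_congr rfl
    intro r _
    rw [hp1, hq1, e1 r]
  rw [esum1, esum2]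
  ring

lemma F2_rec (x t : ℤ) (ht : 3 ≤ t) : F2 x t = F2 (x-1) (t-1) - F1 (x-1) (t-1) := by
  have hT : (t-1).toNat + 1 = t.toNat := by omega
  set T : ℕ := t.toNat with hTdef
  set p : ℤ := (x+t-2)/2 with hp
  have hq : (x+t-4)/2 = p - 1 := by rw [hp]; omega
  have hp1 : ((x-1)+(t-1)-2)/2 = p - 1 := by rw [hp]; omega
  have hq1 : ((x-1)+(t-1)-4)/2 = p - 2 := by rw [hp]; omega
  have e1 : ∀ r : ℕ, t - 1 - r - 2 = t - r - 3 := fun r => by ring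
  set g : ℕ → ℝ := fun r => (-2:ℝ)^r * intChoose p r * intChoose (t - r - 2) (p-1) with hg
  set g1 : ℕ → ℝ := fun r => (-2:ℝ)^r * intChoose (p-1) r * intChoose (t - r - 2) (p-1) with hg1
  set g2 : ℕ → ℝ := fun r => (-2:ℝ)^r * intChoose (p-1) ((r:ℤ)-1) * intChoose (t - r - 2) (p-1) with hg2
  set h : ℕ → ℝ := fun r => (-2:ℝ)^r * intChoose (p-1) r * intChoose (t - r - 3) (p-1) with hh
  set k : ℕ → ℝ := fun r => (-2:ℝ)^r * intChoose (p-1) r * intChoose (t - r - 3) (p-2) with hk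
  have hF2 : F2 x t = ∑ r ∈ Finset.range (T + 1), g r := by
    unfold F2
    exact Finset.sum_congr rfl (fun r _ => by simp only [hg]; rw [hq])
  have stepA : ∀ r : ℕ, g r = g1 r + g2 r := by
    intro r
    simp only [hg, hg1, hg2]
    by_cases hbad : p = 0 ∧ (r:ℤ) = 0
    · rw [intChoose_of_neg (show p - 1 < 0 by omega)]
      ring
    · rw [intChoose_pascal (show ¬(p = 0 ∧ (r:ℤ) = 0) from hbad)]
      ring
  have stepC : ∀ r : ℕ, g1 r = h r + k r := by
    intro r
    simp only [hg1, hh, hk]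
    by_cases hbad : t - r - 2 = 0 ∧ p - 1 = 0
    · rw [intChoose_of_lt (show p - 1 < (r:ℤ) by omega)]
      ring
    · rw [intChoose_pascal (show ¬(t - r - 2 = 0 ∧ p - 1 = 0) from hbad)]
      have e : t - r - 2 - 1 = t - r - 3 := by ring
      have e2 : p - 1 - 1 = p - 2 := by ring
      rw [e, e2]
      ring
  have hg2sum : ∑ r ∈ Finset.range (T + 1), g2 r = (-2) * ∑ r ∈ Finset.range T, h r := by
    rw [Finset.sum_range_succ' g2 T]
    have hz : g2 0 = 0 := by
      simp only [hg2]
      rw [intChoose_of_neg (show ((0:ℕ):ℤ) - 1 < 0 by norm_num)]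
      ring
    rw [hz, add_zero, Finset.mul_sum]
    apply Finset.sum_congr rfl
    intro r _
    simp only [hg2, hh]
    rw [show (((r+1:ℕ)):ℤ) - 1 = (r:ℤ) by push_cast; ring,
      show (t - ((r+1:ℕ):ℤ) - 2) = t - r - 3 by push_cast; ring]
    rw [pow_succ]
    ring
  have htopzero : ∀ z : ℤ, intChoose (t - (T:ℤ) - 3) z = 0 := by
    intro z
    apply intChoose_neg_left
    omega
  have hhsum : ∑ r ∈ Finset.range (T + 1), h r = ∑ r ∈ Finset.range T, h r := by
    rw [Finset.sum_range_succ]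
    simp only [hh]
    rw [htopzero (p-1), mul_zero, add_zero]
  have hksum : ∑ r ∈ Finset.range (T + 1), k r = ∑ r ∈ Finset.range T, k r := by
    rw [Finset.sum_range_succ]
    simp only [hk]
    rw [htopzero (p-2), mul_zero, add_zero]
  have hF1' : F1 (x-1) (t-1) = ∑ r ∈ Finset.range T, h r := by
    unfold F1
    apply Finset.sum_congr (by rw [hT])
    intro r _
    simp only [hh]
    rw [hp1, e1 r]
  have hF2' : F2 (x-1) (t-1) = ∑ r ∈ Finset.range T, k r := by
    unfold F2
    apply Finset.sum_congr (by rw [hT])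
    intro r _
    simp only [hk]
    rw [hp1, hq1, e1 r]
  rw [hF2, Finset.sum_congr rfl (fun r _ => stepA r), Finset.sum_add_distrib,
    Finset.sum_congr rfl (fun r _ => stepC r), Finset.sum_add_distrib,
    hhsum, hksum, hg2sum, hF1', hF2']
  ring


lemma F1_base (x : ℤ) (hx : Even x) : F1 x 2 = if x = 0 then 1 else 0 := by
  obtain ⟨c, hc⟩ := hx
  have hp : (x+2-2)/2 = c := by omega
  unfold F1
  rw [show (2:ℤ).toNat + 1 = 3 from rfl, Finset.sum_range_succ, Finset.sum_range_succ,
    Finset.sum_range_one, hp]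
  have hz : ∀ r : ℕ, 1 ≤ r → intChoose c r * intChoose (2 - r - 2) c = 0 := by
    intro r hr
    rcases le_or_gt 0 c with h0 | h0
    · rw [intChoose_neg_left (show 2 - (r:ℤ) - 2 < 0 by omega), mul_zero]
    · rw [intChoose_of_lt (show c < (r:ℤ) by omega), zero_mul]
  have h1 := hz 1 (le_refl 1)
  have h2 := hz 2 (by omega)
  simp only [mul_assoc]
  rw [h1, h2, mul_zero, mul_zero, add_zero, add_zero]
  by_cases h0 : x = 0
  · have : c = 0 := by omega
    subst this
    rw [if_pos h0]
    simp only [Nat.cast_zero]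
    norm_num [intChoose_zero_right]
  · rw [if_neg h0]
    rcases lt_trichotomy c 0 with hcc | hcc | hcc
    · rw [intChoose_of_lt (show c < ((0:ℕ):ℤ) by norm_num; omega)]
      ring
    · exfalso; omega
    · rw [show (2 - ((0:ℕ):ℤ) - 2) = 0 by norm_num,
        intChoose_of_lt (show (0:ℤ) < c from hcc)]
      ring

lemma F2_base (x : ℤ) (hx : Even x) : F2 x 2 = if x = 2 then 1 else 0 := by
  obtain ⟨c, hc⟩ := hx
  have hp : (x+2-2)/2 = c := by omega
  have hq : (x+2-4)/2 = c - 1 := by omega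
  unfold F2
  rw [show (2:ℤ).toNat + 1 = 3 from rfl, Finset.sum_range_succ, Finset.sum_range_succ,
    Finset.sum_range_one, hp, hq]
  have hz : ∀ r : ℕ, 1 ≤ r → intChoose c r * intChoose (2 - r - 2) (c-1) = 0 := by
    intro r hr
    rcases le_or_gt 1 c with h0 | h0
    · rw [intChoose_neg_left (show 2 - (r:ℤ) - 2 < 0 by omega), mul_zero]
    · rw [intChoose_of_lt (show c < (r:ℤ) by omega), zero_mul]
  have h1 := hz 1 (le_refl 1)
  have h2 := hz 2 (by omega)
  simp only [mul_assoc]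
  rw [h1, h2, mul_zero, mul_zero, add_zero, add_zero]
  by_cases h0 : x = 2
  · have : c = 1 := by omega
    subst this
    rw [if_pos h0]
    simp only [Nat.cast_zero]
    norm_num [intChoose_zero_right]
  · rw [if_neg h0]
    rw [show (2 - ((0:ℕ):ℤ) - 2) = 0 by norm_num]
    rcases lt_trichotomy c 0 with hcc | hcc | hcc
    · rw [intChoose_of_lt (show c < ((0:ℕ):ℤ) by norm_num; omega)]
      ring
    · rw [intChoose_of_neg (show c - 1 < 0 by omega)]
      ring
    · have : 2 ≤ c := by omega
      rw [intChoose_of_lt (show (0:ℤ) < c - 1 by omega)]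
      ring


lemma key : ∀ m : ℕ, 1 ≤ m → ∀ x : ℤ, Even (x + (m:ℤ) + 1) →
    SB true x m = ((F2 x ((m:ℤ)+1) : ℝ) : ℂ) ∧
    SB false x m = -Complex.I * ((F1 x ((m:ℤ)+1) : ℝ) : ℂ) := by
  intro m
  induction m with
  | zero => intro h; omega
  | succ m ih =>
    intro _ x hpar
    rcases Nat.eq_zero_or_pos m with hm0 | hm1
    · subst hm0
      have hevx : Even x := by
        obtain ⟨c, hc⟩ := hpar
        exact ⟨c - 1, by push_cast at hc ⊢; omega⟩
      constructor
      · rw [SB_rec true x 0, SB_base, SB_base]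
        simp only [show eb true = 1 from rfl, Bool.not_true]
        rw [show (((0+1:ℕ)):ℤ) + 1 = 2 by norm_num, F2_base x hevx]
        by_cases h2 : x = 2
        · have e1 : x - 1 = 1 := by omega
          simp [h2, e1]
        · have e1 : ¬ (x - 1 = 1) := by omega
          simp [h2, e1]
      · rw [SB_rec false x 0, SB_base, SB_base]
        simp only [show eb false = -1 from rfl, Bool.not_false]
        rw [show (((0+1:ℕ)):ℤ) + 1 = 2 by norm_num, F1_base x hevx]
        by_cases h2 : x = 0
        · have e1 : x - -1 = 1 := by omega
          simp [h2, e1]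
        · have e1 : ¬ (x - -1 = 1) := by omega
          simp [h2, e1]
    · have hpar1 : Even ((x-1) + (m:ℤ) + 1) := by
        obtain ⟨c, hc⟩ := hpar
        exact ⟨c - 1, by push_cast at hc ⊢; omega⟩
      have hpar2 : Even ((x+1) + (m:ℤ) + 1) := by
        obtain ⟨c, hc⟩ := hpar
        exact ⟨c, by push_cast at hc ⊢; omega⟩
      obtain ⟨ihT1, ihF1⟩ := ih hm1 (x-1) hpar1
      obtain ⟨ihT2, ihF2⟩ := ih hm1 (x+1) hpar2
      have ht3 : 3 ≤ (m:ℤ) + 1 + 1 := by omega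
      constructor
      · rw [SB_rec true x m, show eb true = 1 from rfl, Bool.not_true, ihT1, ihF1,
          show (((m+1:ℕ)):ℤ) + 1 = (m:ℤ)+1+1 by push_cast; ring,
          F2_rec x ((m:ℤ)+1+1) ht3]
        rw [show (m:ℤ) + 1 + 1 - 1 = (m:ℤ) + 1 by ring]
        push_cast
        ring_nf
        rw [Complex.I_sq]
        ring
      · rw [SB_rec false x m, show eb false = -1 from rfl, Bool.not_false,
          show x - -1 = x + 1 by ring, ihT2, ihF2,
          show (((m+1:ℕ)):ℤ) + 1 = (m:ℤ)+1+1 by push_cast; ring,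
          F1_rec x ((m:ℤ)+1+1) ht3]
        rw [show (m:ℤ) + 1 + 1 - 1 = (m:ℤ) + 1 by ring]
        push_cast
        ring


lemma sum_split (x : ℤ) (m : ℕ) :
    ∑ d ∈ pathsTo x (m+1), (-Complex.I)^turns d = SB true x m + SB false x m := by
  unfold SB
  rw [← Finset.sum_filter_add_sum_filter_not (pathsTo x (m+1))
    (fun d => d (Fin.last m) = true)]
  congr 1
  apply Finset.sum_congr _ (fun _ _ => rfl)
  apply Finset.filter_congr
  intro d _
  simp

lemma F1_eq_cut (x t : ℤ) (hx : |x| < t) (hpar : Even (x + t)) :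
    F1 x t = ∑ r ∈ Finset.range (((t - |x|) / 2).toNat + 1),
      (-2:ℝ)^r * intChoose ((x+t-2)/2) r * intChoose (t - r - 2) ((x+t-2)/2) := by
  obtain ⟨c, hc⟩ := hpar
  have hx' := abs_lt.mp hx
  symm
  apply Finset.sum_subset
  · apply Finset.range_subset_range.mpr
    rcases abs_cases x with ⟨he, _⟩ | ⟨he, _⟩ <;> rw [he] <;> omega
  · intro r _ hr
    rw [Finset.mem_range, not_lt] at hr
    rcases abs_cases x with ⟨he, h0⟩ | ⟨he, h0⟩
    · rw [he] at hr
      rw [intChoose_of_lt (show t - (r:ℤ) - 2 < (x+t-2)/2 by omega), mul_zero]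
    · rw [he] at hr
      rw [intChoose_of_lt (show (x+t-2)/2 < (r:ℤ) by omega), mul_zero, zero_mul]

lemma F2_eq_cut (x t : ℤ) (hx : |x| < t) (hpar : Even (x + t)) :
    F2 x t = ∑ r ∈ Finset.range (((t - |x|) / 2).toNat + 1),
      (-2:ℝ)^r * intChoose ((x+t-2)/2) r * intChoose (t - r - 2) ((x+t-4)/2) := by
  obtain ⟨c, hc⟩ := hpar
  have hx' := abs_lt.mp hx
  symm
  apply Finset.sum_subset
  · apply Finset.range_subset_range.mpr
    rcases abs_cases x with ⟨he, _⟩ | ⟨he, _⟩ <;> rw [he] <;> omega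
  · intro r _ hr
    rw [Finset.mem_range, not_lt] at hr
    rcases abs_cases x with ⟨he, h0⟩ | ⟨he, h0⟩
    · rw [he] at hr
      rw [intChoose_of_lt (show t - (r:ℤ) - 2 < (x+t-4)/2 by omega), mul_zero]
    · rw [he] at hr
      rw [intChoose_of_lt (show (x+t-2)/2 < (r:ℤ) by omega), mul_zero, zero_mul]

/-- Alternative "explicit" formula (A) for the basic model. -/
theorem alternative_explicit_formula_A (x t : ℤ) (hx : |x| < t) (hpar : Even (x + t)) :
    (a x t).re = (2 : ℝ) ^ (((1 : ℝ) - t) / 2) *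
      ∑ r ∈ Finset.range (((t - |x|) / 2).toNat + 1),
        (-2 : ℝ) ^ r * intChoose ((x + t - 2) / 2) r *
          intChoose (t - (r : ℤ) - 2) ((x + t - 2) / 2) ∧
    (a x t).im = (2 : ℝ) ^ (((1 : ℝ) - t) / 2) *
      ∑ r ∈ Finset.range (((t - |x|) / 2).toNat + 1),
        (-2 : ℝ) ^ r * intChoose ((x + t - 2) / 2) r *
          intChoose (t - (r : ℤ) - 2) ((x + t - 4) / 2) := by
  have ht2 : 2 ≤ t := by
    obtain ⟨c, hc⟩ := hpar
    have hx' := abs_lt.mp hx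
    omega
  set m : ℕ := t.toNat - 1 with hm
  have hm1 : 1 ≤ m := by omega
  have hmt : (m:ℤ) + 1 = t := by omega
  have htop : t.toNat = m + 1 := by omega
  have hparm : Even (x + (m:ℤ) + 1) := by
    obtain ⟨c, hc⟩ := hpar
    exact ⟨c, by omega⟩
  obtain ⟨hT, hF⟩ := key m hm1 x hparm
  have hsum : ∑ d ∈ pathsTo x t.toNat, (-Complex.I)^turns d
      = ((F2 x t : ℝ) : ℂ) + -Complex.I * ((F1 x t : ℝ) : ℂ) := by
    rw [htop, sum_split, hT, hF, hmt]
  have hpow : (2 : ℂ) ^ ((1 - (t : ℂ)) / 2)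
      = (((2:ℝ) ^ (((1:ℝ) - t) / 2) : ℝ) : ℂ) := by
    rw [Complex.ofReal_cpow (by norm_num) (((1:ℝ) - t) / 2)]
    push_cast
    ring_nf
  have ha : a x t = (((2:ℝ) ^ (((1:ℝ) - t) / 2) * F1 x t : ℝ) : ℂ)
      + (((2:ℝ) ^ (((1:ℝ) - t) / 2) * F2 x t : ℝ) : ℂ) * Complex.I := by
    rw [a, hsum, hpow]
    push_cast
    ring_nf
    rw [Complex.I_sq]
    ring
  rw [ha]
  constructor
  · rw [Complex.add_re, Complex.ofReal_re, Complex.mul_re, Complex.I_re, Complex.I_im,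
      Complex.ofReal_re, Complex.ofReal_im, F1_eq_cut x t hx hpar]
    ring
  · rw [Complex.add_im, Complex.ofReal_im, Complex.mul_im, Complex.I_re, Complex.I_im,
      Complex.ofReal_re, Complex.ofReal_im, F2_eq_cut x t hx hpar]
    ring
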